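/- arXiv:0911.2551 — 2 statements merged into one kernel-verified Lean document; each statement's English description precedes it below -/
import Mathlib

section
/- Let (𝒳,𝓕) be a measurable space, let ν0 and ν̲1 be probability measures on 𝒳 with ν̲1 ≪ ν0, and let L* = log(dν̲1/dν0) be continuous on the support of ν0. Let ν1 be a probability measure on 𝒳 such that the pushforward of ν1 under L* is stochastically larger than the pushforward of ν̲1 under L*. Let τ_C* = inf{n ≥ 1 : max_{1≤k≤n} Σ_{i=k}^n L*(X_i) ≥ η} be the CUSUM stopping time with threshold η ∈ ℝ. Then for every change point λ ≥ 1 and every integer N ≥ 0, almost surely P_λ^{ν0,ν̲1}( (τ_C* − λ + 1)^+ ≤ N | 𝓕_{λ−1} ) ≤ P_λ^{ν0,ν1}( (τ_C* − λ + 1)^+ ≤ N | 𝓕_{λ−1} ); consequently, almost surely E_λ^{ν0,ν̲1}[ (τ_C* − λ + 1)^+ | 𝓕_{λ−1} ] ≥ E_λ^{ν0,ν1}[ (τ_C* − λ + 1)^+ | 𝓕_{λ−1} ]. -/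
/-!
Before the change point the two laws have the same marginals, so they agree on `𝓕_{λ-1}`, and
every statement reduces to comparing `P₁ (A ∩ {τ ≤ m})` with `P₂ (A ∩ {τ ≤ m})` for
`A ∈ 𝓕_{λ-1}`. This event depends only on `X_1, …, X_m`: on the pre-change coordinates in an
arbitrary way, and on the post-change ones only through the values `L*(X_i)`, monotonically,
since the CUSUM statistic is nondecreasing in each of them. By independence its probability is
that of a product measure, and swapping the law of one coordinate at a time for one whose
`L*`-image is stochastically larger (Fubini in that coordinate) can only increase the
probability of such an upper set. The expected delays are then compared by summing the tails
`P(delay > N)`.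
-/

open MeasureTheory ProbabilityTheory ENNReal

/-- A probability measure `μ` on `ℝ` is stochastically larger than `μ'` if
`μ [t, ∞) ≥ μ' [t, ∞)` for every `t`. -/
def StochLarger (μ μ' : Measure ℝ) : Prop :=
  ∀ t : ℝ, μ' (Set.Ici t) ≤ μ (Set.Ici t)

/-- The (topological) support of a measure: points all of whose open neighbourhoods have
positive measure. -/
def measSupport {𝒳 : Type*} [TopologicalSpace 𝒳] [MeasurableSpace 𝒳] (μ : Measure 𝒳) : Set 𝒳 :=
  {x | ∀ U : Set 𝒳, IsOpen U → x ∈ U → 0 < μ U}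

/-- The CUSUM statistic `max_{1 ≤ k ≤ n} ∑_{i=k}^n L(X_i)` at time `n ≥ 1`
(junk value `0` for `n = 0`). -/
noncomputable def cusumS {𝒳 : Type*} (L : 𝒳 → ℝ) (ω : ℕ → 𝒳) (n : ℕ) : ℝ :=
  if h : (Finset.Icc 1 n).Nonempty then
    (Finset.Icc 1 n).sup' h fun k => ∑ i ∈ Finset.Icc k n, L (ω i)
  else 0

/-- The CUSUM stopping time `τ = inf {n ≥ 1 : max_{1 ≤ k ≤ n} ∑_{i=k}^n L(X_i) ≥ η}`,
with value `∞` if the threshold is never crossed. -/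
noncomputable def tauC {𝒳 : Type*} (L : 𝒳 → ℝ) (η : ℝ) (ω : ℕ → 𝒳) : ℕ∞ :=
  sInf {m : ℕ∞ | ∃ n : ℕ, m = n ∧ 1 ≤ n ∧ η ≤ cusumS L ω n}

/-- `𝓕_m`: the σ-algebra generated by the observations `X_1, …, X_m` on the sequence space. -/
def obsSigma (𝒳 : Type*) [m𝒳 : MeasurableSpace 𝒳] (m : ℕ) : MeasurableSpace (ℕ → 𝒳) :=
  ⨆ i ∈ Finset.Icc 1 m, MeasurableSpace.comap (fun ω : ℕ → 𝒳 => ω i) m𝒳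

def IsUpperFor {α : Type*} (R : α → α → Prop) (S : Set α) : Prop :=
  ∀ ⦃a b⦄, R a b → a ∈ S → b ∈ S

theorem IsUpperSet.eq_empty_or_univ_or_Ici_or_Ioi {α : Type*} [ConditionallyCompleteLinearOrder α]
    {U : Set α} (hU : IsUpperSet U) :
    U = ∅ ∨ U = Set.univ ∨ (∃ c, U = Set.Ici c) ∨ ∃ c, U = Set.Ioi c := by
  rcases U.eq_empty_or_nonempty with hempty | hne
  · exact Or.inl hempty
  by_cases hbdd : BddBelow U
  · by_cases hmem : sInf U ∈ U
    · exact Or.inr <| Or.inr <| Or.inl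
        ⟨sInf U, subset_antisymm (fun u hu => csInf_le hbdd hu) (hU.Ici_subset hmem)⟩
    · refine Or.inr <| Or.inr <| Or.inr ⟨sInf U, subset_antisymm (fun u hu => ?_) fun r hr => ?_⟩
      · exact (csInf_le hbdd hu).lt_of_ne fun h => hmem (h ▸ hu)
      · obtain ⟨u, hu, hur⟩ := exists_lt_of_csInf_lt hne hr
        exact hU hur.le hu
  · refine Or.inr <| Or.inl <| Set.eq_univ_of_forall fun r => ?_
    obtain ⟨u, hu, hur⟩ := not_bddBelow_iff.mp hbdd r
    exact hU hur.le hu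

namespace StochLarger

variable {μ μ' : Measure ℝ}

theorem measure_iUnion_Ici_le (h : StochLarger μ μ') {t : ℕ → ℝ} (ht : Antitone t) :
    μ' (⋃ n, Set.Ici (t n)) ≤ μ (⋃ n, Set.Ici (t n)) := by
  have hmono : Monotone fun n => Set.Ici (t n) := fun _ _ hmn => Set.Ici_subset_Ici.2 (ht hmn)
  rw [hmono.measure_iUnion, hmono.measure_iUnion]
  exact iSup_mono fun n => h (t n)

theorem measure_le_of_isUpperSet (h : StochLarger μ μ') {U : Set ℝ} (hU : IsUpperSet U) :
    μ' U ≤ μ U := by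
  rcases hU.eq_empty_or_univ_or_Ici_or_Ioi with rfl | rfl | ⟨c, rfl⟩ | ⟨c, rfl⟩
  · simp
  · have huniv : ⋃ n : ℕ, Set.Ici (-(n : ℝ)) = Set.univ :=
      Set.eq_univ_of_forall fun r => Set.mem_iUnion.2
        ⟨⌈-r⌉₊, Set.mem_Ici.2 (neg_le.1 (Nat.le_ceil _))⟩
    rw [← huniv]
    exact h.measure_iUnion_Ici_le fun m n hmn => neg_le_neg (Nat.cast_le.2 hmn)
  · exact h c
  · rw [← iUnion_Ici_eq_Ioi_of_lt_of_tendsto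
      (fun n : ℕ => lt_add_of_pos_right c Nat.one_div_pos_of_nat)
      (by simpa using tendsto_one_div_add_atTop_nhds_zero_nat.const_add c)]
    exact h.measure_iUnion_Ici_le fun m n hmn => add_le_add_right (Nat.one_div_le_one_div hmn) c

theorem measure_le_of_comp {X : Type*} [MeasurableSpace X] {f : X → ℝ} (hf : Measurable f)
    {ρ σ : Measure X} (h : StochLarger (σ.map f) (ρ.map f)) {S : Set X}
    (hS : IsUpperFor (fun a b => f a ≤ f b) S) : ρ S ≤ σ S := by
  set U : Set ℝ := (upperClosure (f '' S) : Set ℝ)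
  have hSU : S = f ⁻¹' U := by
    ext x
    refine ⟨fun hx => ⟨f x, ⟨x, hx, rfl⟩, le_rfl⟩, ?_⟩
    rintro ⟨_, ⟨a, ha, rfl⟩, hax⟩
    exact hS hax ha
  have hUmeas : MeasurableSet U := (upperClosure (f '' S)).upper.ordConnected.measurableSet
  rw [hSU, ← Measure.map_apply hf hUmeas, ← Measure.map_apply hf hUmeas]
  exact h.measure_le_of_isUpperSet (upperClosure (f '' S)).upper

end StochLarger

namespace MeasureTheory.Measure

variable {ι : Type*} [Fintype ι] [DecidableEq ι] {X : ι → Type*} [∀ i, MeasurableSpace (X i)]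
  (R : ∀ i, X i → X i → Prop)

theorem pi_le_pi_of_isUpperFor_of_forall_ne [∀ i, Std.Refl (R i)]
    (μ μ' : ∀ i, Measure (X i)) [∀ i, SigmaFinite (μ i)] [∀ i, SigmaFinite (μ' i)] (i : ι)
    (hagree : ∀ j ≠ i, μ' j = μ j)
    (hi : ∀ S, MeasurableSet S → IsUpperFor (R i) S → μ i S ≤ μ' i S)
    {B : Set (∀ i, X i)} (hB : MeasurableSet B)
    (hBup : IsUpperFor (fun x y => ∀ j, R j (x j) (y j)) B) :
    Measure.pi μ B ≤ Measure.pi μ' B := by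
  rcases isEmpty_or_nonempty (∀ i, X i) with hX | hX
  · simp [Set.eq_empty_of_isEmpty B]
  obtain ⟨x₀⟩ := hX
  have hsection (ν : Measure (X i)) (x : ∀ i, X i) :
      ∫⁻ t, B.indicator 1 (Function.update x i t) ∂ν = ν (Function.update x i ⁻¹' B) := by
    rw [← lintegral_indicator_one (measurable_update x hB)]
    rfl
  have hsection_upper (x : ∀ i, X i) : IsUpperFor (R i) (Function.update x i ⁻¹' B) := by
    intro a b hab ha
    refine hBup (fun j => ?_) ha
    rcases eq_or_ne j i with rfl | hj
    · simpa using hab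
    · simpa [Function.update_of_ne hj] using Std.Refl.refl (r := R j) (x j)
  have hrest : (fun j : ↥(Finset.univ.erase i) => μ j) = fun j : ↥(Finset.univ.erase i) => μ' j :=
    funext fun j => (hagree j (Finset.ne_of_mem_erase j.2)).symm
  have hf : Measurable (B.indicator (1 : (∀ i, X i) → ℝ≥0∞)) := measurable_one.indicator hB
  -- integrate out coordinate `i` first: its sections of `B` are `R i`-upper
  rw [← lintegral_indicator_one hB, ← lintegral_indicator_one hB, lintegral_eq_lmarginal_univ x₀,
    lintegral_eq_lmarginal_univ x₀, ← Finset.insert_erase (Finset.mem_univ i),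
    lmarginal_insert' _ hf (Finset.notMem_erase i _),
    lmarginal_insert' _ hf (Finset.notMem_erase i _)]
  simp only [hsection]
  calc _ ≤ (∫⋯∫⁻_Finset.univ.erase i, fun x => μ' i (Function.update x i ⁻¹' B) ∂μ) x₀ :=
        lmarginal_mono (fun x => hi _ (measurable_update x hB) (hsection_upper x)) x₀
    _ = _ := by simp only [lmarginal, hrest]

theorem pi_le_pi_of_isUpperFor [∀ i, Std.Refl (R i)]
    (μ μ' : ∀ i, Measure (X i)) [∀ i, SigmaFinite (μ i)] [∀ i, SigmaFinite (μ' i)]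
    (hμμ' : ∀ i S, MeasurableSet S → IsUpperFor (R i) S → μ i S ≤ μ' i S)
    {B : Set (∀ i, X i)} (hB : MeasurableSet B)
    (hBup : IsUpperFor (fun x y => ∀ j, R j (x j) (y j)) B) :
    Measure.pi μ B ≤ Measure.pi μ' B := by
  have hσ (s : Finset ι) (j : ι) : SigmaFinite (s.piecewise μ' μ j) := by
    by_cases hj : j ∈ s <;> simp only [Finset.piecewise, hj, if_true, if_false] <;> infer_instance
  suffices ∀ s : Finset ι, Measure.pi μ B ≤ Measure.pi (s.piecewise μ' μ) B by
    simpa using this Finset.univ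
  intro s
  induction s using Finset.induction_on with
  | empty => simp
  | insert i s hi ih =>
    refine ih.trans (pi_le_pi_of_isUpperFor_of_forall_ne R _ _ i (fun j hj => ?_) ?_ hB hBup)
    · exact Finset.piecewise_insert_of_ne _ _ _ hj
    · simpa [Finset.piecewise_insert, Finset.piecewise_eq_of_notMem _ _ _ hi] using hμμ' i

end MeasureTheory.Measure

section SequenceSpace

variable {𝒳 : Type*} [MeasurableSpace 𝒳]

theorem obsSigma_le (m : ℕ) : obsSigma 𝒳 m ≤ MeasurableSpace.pi :=
  iSup₂_le fun i _ => (measurable_pi_apply i).comap_le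

theorem obsSigma_eq_comap_restrict (m : ℕ) :
    obsSigma 𝒳 m = MeasurableSpace.comap (Finset.Icc 1 m).restrict MeasurableSpace.pi := by
  simp only [obsSigma, MeasurableSpace.pi, MeasurableSpace.comap_iSup, MeasurableSpace.comap_comp]
  exact iSup_subtype'

theorem mem_iff_of_measurableSet_obsSigma {m : ℕ} {A : Set (ℕ → 𝒳)}
    (hA : MeasurableSet[obsSigma 𝒳 m] A) {ω ω' : ℕ → 𝒳}
    (h : ∀ n ∈ Finset.Icc 1 m, ω n = ω' n) : ω ∈ A ↔ ω' ∈ A := by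
  rw [obsSigma_eq_comap_restrict] at hA
  obtain ⟨A', -, rfl⟩ := hA
  have : (Finset.Icc 1 m).restrict ω = (Finset.Icc 1 m).restrict ω' := funext fun n => h n n.2
  simp only [Set.mem_preimage, this]

theorem measure_le_of_iIndepFun_of_isUpperFor {P₁ P₂ : Measure (ℕ → 𝒳)}
    (h₁ : iIndepFun (fun (n : ℕ) (ω : ℕ → 𝒳) => ω n) P₁)
    (h₂ : iIndepFun (fun (n : ℕ) (ω : ℕ → 𝒳) => ω n) P₂)
    (R : ℕ → 𝒳 → 𝒳 → Prop) [∀ n, Std.Refl (R n)] (m : ℕ)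
    (hdom : ∀ n ∈ Finset.Icc 1 m, ∀ S, MeasurableSet S → IsUpperFor (R n) S →
      P₁.map (fun ω => ω n) S ≤ P₂.map (fun ω => ω n) S)
    {C : Set (ℕ → 𝒳)} (hC : MeasurableSet C)
    (hCup : IsUpperFor (fun ω ω' => ∀ n ∈ Finset.Icc 1 m, R n (ω n) (ω' n)) C) :
    P₁ C ≤ P₂ C := by
  classical
  have := h₁.isProbabilityMeasure
  have := h₂.isProbabilityMeasure
  set s := Finset.Icc 1 m
  obtain ⟨ω₀⟩ : Nonempty (ℕ → 𝒳) := nonempty_of_isProbabilityMeasure P₁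
  -- `C` only sees the coordinates in `s`, so it is cut out by its section through `ω₀`
  have hCfin : C = s.restrict ⁻¹' (Function.updateFinset ω₀ s ⁻¹' C) := by
    ext ω
    have hω : ∀ n ∈ s, Function.updateFinset ω₀ s (s.restrict ω) n = ω n := fun n hn => by
      simp [Function.updateFinset, hn]
    exact ⟨hCup fun n hn => (hω n hn).symm ▸ Std.Refl.refl _,
      hCup fun n hn => (hω n hn) ▸ Std.Refl.refl _⟩
  have hmap (P : Measure (ℕ → 𝒳)) (hP : iIndepFun (fun (n : ℕ) (ω : ℕ → 𝒳) => ω n) P) :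
      P.map s.restrict = Measure.pi fun n : s => P.map fun ω => ω n :=
    (hP.precomp Subtype.val_injective).map_fun_eq_pi_map
      fun n => (measurable_pi_apply _).aemeasurable
  have hBmeas : MeasurableSet (Function.updateFinset ω₀ s ⁻¹' C) := measurable_updateFinset hC
  rw [hCfin, ← Measure.map_apply (Finset.measurable_restrict s) hBmeas,
    ← Measure.map_apply (Finset.measurable_restrict s) hBmeas, hmap P₁ h₁, hmap P₂ h₂]
  refine Measure.pi_le_pi_of_isUpperFor (fun n : s => R n) _ _ (fun n => hdom n n.2) hBmeas ?_
  intro x y hxy hx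
  refine hCup (fun n hn => ?_) hx
  simpa [Function.updateFinset, hn] using hxy ⟨n, hn⟩

end SequenceSpace

section Cusum

variable {𝒳 : Type*} (L : 𝒳 → ℝ) (η : ℝ)

theorem cusumS_mono {ω ω' : ℕ → 𝒳} {n : ℕ} (h : ∀ i ∈ Finset.Icc 1 n, L (ω i) ≤ L (ω' i)) :
    cusumS L ω n ≤ cusumS L ω' n := by
  unfold cusumS
  split_ifs with hne
  · refine Finset.sup'_mono_fun fun k hk => Finset.sum_le_sum fun i hi => h i ?_
    rw [Finset.mem_Icc] at hk hi ⊢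
    exact ⟨hk.1.trans hi.1, hi.2⟩
  · exact le_rfl

theorem measurable_cusumS [MeasurableSpace 𝒳] (hL : Measurable L) (n : ℕ) :
    Measurable fun ω : ℕ → 𝒳 => cusumS L ω n := by
  unfold cusumS
  split_ifs with hne
  · fun_prop
  · exact measurable_const

theorem tauC_le_iff {ω : ℕ → 𝒳} {m : ℕ} :
    tauC L η ω ≤ m ↔ ∃ n ∈ Finset.Icc 1 m, η ≤ cusumS L ω n := by
  constructor
  · intro h
    have hne : {m : ℕ∞ | ∃ n : ℕ, m = n ∧ 1 ≤ n ∧ η ≤ cusumS L ω n}.Nonempty := by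
      by_contra hempty
      rw [Set.not_nonempty_iff_eq_empty] at hempty
      simp [tauC, hempty] at h
    obtain ⟨n, hn, h1, hη⟩ := csInf_mem hne
    rw [tauC, hn, Nat.cast_le] at h
    exact ⟨n, Finset.mem_Icc.2 ⟨h1, h⟩, hη⟩
  · rintro ⟨n, hn, hη⟩
    exact (show tauC L η ω ≤ n from sInf_le ⟨n, rfl, (Finset.mem_Icc.1 hn).1, hη⟩).trans
      (Nat.cast_le.2 (Finset.mem_Icc.1 hn).2)

theorem tauC_le_of_le {ω ω' : ℕ → 𝒳} {m : ℕ} (h : ∀ i ∈ Finset.Icc 1 m, L (ω i) ≤ L (ω' i))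
    (hω : tauC L η ω ≤ m) : tauC L η ω' ≤ m := by
  obtain ⟨n, hn, hη⟩ := (tauC_le_iff L η).1 hω
  refine (tauC_le_iff L η).2 ⟨n, hn, hη.trans (cusumS_mono L fun i hi => h i ?_)⟩
  rw [Finset.mem_Icc] at hi hn ⊢
  exact ⟨hi.1, hi.2.trans hn.2⟩

theorem measurableSet_tauC_le [MeasurableSpace 𝒳] (hL : Measurable L) (m : ℕ) :
    MeasurableSet {ω : ℕ → 𝒳 | tauC L η ω ≤ m} := by
  have : {ω : ℕ → 𝒳 | tauC L η ω ≤ m} = ⋃ n ∈ Finset.Icc 1 m, {ω | η ≤ cusumS L ω n} := by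
    ext ω
    simp [tauC_le_iff]
  rw [this]
  exact .biUnion (Finset.countable_toSet _) fun n _ =>
    measurableSet_le measurable_const (measurable_cusumS L hL n)

end Cusum

theorem ENat.add_one_sub_le_iff {a : ℕ∞} {l N : ℕ} (hl : 1 ≤ l) :
    a + 1 - l ≤ N ↔ a ≤ (l - 1 + N : ℕ) := by
  have hcast : (N : ℕ∞) + l = (l - 1 + N : ℕ) + 1 := by norm_cast; omega
  rw [tsub_le_iff_right, hcast, ENat.add_le_add_iff_right ENat.one_ne_top]

theorem ENat.toENNReal_eq_tsum_ite (a : ℕ∞) :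
    (a : ℝ≥0∞) = ∑' N : ℕ, if a ≤ N then 0 else 1 := by
  induction a using ENat.recTopCoe with
  | top => simp
  | coe k =>
    rw [tsum_eq_sum (s := Finset.range k) fun N hN => by simpa using hN]
    simp [Finset.sum_ite_of_false]

section Versions

variable {Ω : Type*} {m m0 : MeasurableSpace Ω}

theorem lintegral_enat_eq_tsum {μ : Measure[m0] Ω} {D : Ω → ℕ∞}
    (hD : ∀ N : ℕ, MeasurableSet {ω | D ω ≤ N}) :
    ∫⁻ ω, (D ω : ℝ≥0∞) ∂μ = ∑' N : ℕ, μ {ω | D ω ≤ N}ᶜ := by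
  have hpt (ω : Ω) : (D ω : ℝ≥0∞) = ∑' N : ℕ, {ω | D ω ≤ N}ᶜ.indicator 1 ω := by
    rw [ENat.toENNReal_eq_tsum_ite]
    congr 1 with N
    by_cases h : D ω ≤ N <;> simp [h]
  rw [lintegral_congr hpt,
    lintegral_tsum fun N => (measurable_one.indicator (hD N).compl).aemeasurable]
  simp_rw [lintegral_indicator_one (hD _).compl]

theorem setLIntegral_enat_le_of_measure_inter_le {P₁ P₂ : Measure[m0] Ω}
    [IsFiniteMeasure P₁] [IsFiniteMeasure P₂] {D : Ω → ℕ∞}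
    (hD : ∀ N : ℕ, MeasurableSet {ω | D ω ≤ N}) {A : Set Ω} (hPA : P₁ A = P₂ A)
    (hle : ∀ N : ℕ, P₁ (A ∩ {ω | D ω ≤ N}) ≤ P₂ (A ∩ {ω | D ω ≤ N})) :
    ∫⁻ ω in A, (D ω : ℝ≥0∞) ∂P₂ ≤ ∫⁻ ω in A, (D ω : ℝ≥0∞) ∂P₁ := by
  rw [lintegral_enat_eq_tsum hD, lintegral_enat_eq_tsum hD]
  refine ENNReal.tsum_le_tsum fun N => ?_
  rw [measure_compl (hD N) (measure_ne_top _ _), measure_compl (hD N) (measure_ne_top _ _),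
    Measure.restrict_apply_univ, Measure.restrict_apply_univ, Measure.restrict_apply (hD N),
    Measure.restrict_apply (hD N), Set.inter_comm, hPA]
  exact tsub_le_tsub_left (hle N) _

theorem setLIntegral_eq_of_forall_measure_eq (hm : m ≤ m0) {P₁ P₂ : Measure[m0] Ω}
    (hP : ∀ A, MeasurableSet[m] A → P₁ A = P₂ A) {f : Ω → ℝ≥0∞} (hf : Measurable[m] f)
    {A : Set Ω} (hA : MeasurableSet[m] A) :
    ∫⁻ ω in A, f ω ∂P₁ = ∫⁻ ω in A, f ω ∂P₂ := by
  have htrim : P₁.trim hm = P₂.trim hm := @Measure.ext _ m _ _ fun s hs => by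
    rw [trim_measurableSet_eq hm hs, trim_measurableSet_eq hm hs, hP s hs]
  rw [← setLIntegral_trim hm hf hA, htrim, setLIntegral_trim hm hf hA]

theorem ae_le_of_forall_setLIntegral_le_of_measurable (hm : m ≤ m0) {P : Measure[m0] Ω}
    [IsFiniteMeasure P] {f g : Ω → ℝ≥0∞} (hf : Measurable[m] f) (hg : Measurable[m] g)
    (h : ∀ A, MeasurableSet[m] A → ∫⁻ ω in A, f ω ∂P ≤ ∫⁻ ω in A, g ω ∂P) : f ≤ᵐ[P] g := by
  have := isFiniteMeasure_trim (μ := P) hm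
  refine ae_le_of_ae_le_trim (hm := hm) <|
    ae_le_of_forall_setLIntegral_le_of_sigmaFinite (μ := P.trim hm) hf fun A hA _ => ?_
  rw [setLIntegral_trim hm hf hA, setLIntegral_trim hm hg hA]
  exact h A hA

end Versions

section ChangePoint

variable {𝒳 : Type*} [MeasurableSpace 𝒳] {P₁ P₂ : Measure (ℕ → 𝒳)} {lam : ℕ}

theorem measure_eq_of_measurableSet_obsSigma
    (h₁ : iIndepFun (fun (n : ℕ) (ω : ℕ → 𝒳) => ω n) P₁)
    (h₂ : iIndepFun (fun (n : ℕ) (ω : ℕ → 𝒳) => ω n) P₂)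
    (hpre : ∀ n, 1 ≤ n → n < lam → P₁.map (fun ω => ω n) = P₂.map (fun ω => ω n))
    {A : Set (ℕ → 𝒳)} (hA : MeasurableSet[obsSigma 𝒳 (lam - 1)] A) : P₁ A = P₂ A := by
  have hpre' : ∀ n ∈ Finset.Icc 1 (lam - 1), P₁.map (fun ω => ω n) = P₂.map (fun ω => ω n) :=
    fun n hn => hpre n (Finset.mem_Icc.1 hn).1 (by grind)
  have hup : IsUpperFor (fun ω ω' => ∀ n ∈ Finset.Icc 1 (lam - 1), ω n = ω' n) A :=
    fun _ _ h => (mem_iff_of_measurableSet_obsSigma hA h).1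
  have hAm := obsSigma_le _ A hA
  exact le_antisymm
    (measure_le_of_iIndepFun_of_isUpperFor h₁ h₂ (fun _ => Eq) _
      (fun n hn S _ _ => by rw [hpre' n hn]) hAm hup)
    (measure_le_of_iIndepFun_of_isUpperFor h₂ h₁ (fun _ => Eq) _
      (fun n hn S _ _ => by rw [hpre' n hn]) hAm hup)

theorem measure_inter_tauC_le_le_of_stochLarger
    (h₁ : iIndepFun (fun (n : ℕ) (ω : ℕ → 𝒳) => ω n) P₁)
    (h₂ : iIndepFun (fun (n : ℕ) (ω : ℕ → 𝒳) => ω n) P₂)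
    (hpre : ∀ n, 1 ≤ n → n < lam → P₁.map (fun ω => ω n) = P₂.map (fun ω => ω n))
    {L : 𝒳 → ℝ} (hL : Measurable L)
    (hpost : ∀ n, lam ≤ n →
      StochLarger ((P₂.map fun ω => ω n).map L) ((P₁.map fun ω => ω n).map L))
    (η : ℝ) {A : Set (ℕ → 𝒳)} (hA : MeasurableSet[obsSigma 𝒳 (lam - 1)] A) (m : ℕ) :
    P₁ (A ∩ {ω | tauC L η ω ≤ m}) ≤ P₂ (A ∩ {ω | tauC L η ω ≤ m}) := by
  let R (n : ℕ) (a b : 𝒳) : Prop := (n < lam → a = b) ∧ L a ≤ L b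
  have : ∀ n, Std.Refl (R n) := fun n => ⟨fun a => ⟨fun _ => rfl, le_rfl⟩⟩
  refine measure_le_of_iIndepFun_of_isUpperFor h₁ h₂ R (max m (lam - 1)) (fun n hn S _ hS => ?_)
    ((obsSigma_le _ A hA).inter (measurableSet_tauC_le L η hL m)) fun ω ω' h hω => ⟨?_, ?_⟩
  · rcases lt_or_ge n lam with hlt | hge
    · rw [hpre n (Finset.mem_Icc.1 hn).1 hlt]
    · exact (hpost n hge).measure_le_of_comp hL
        fun _ _ hab => hS ⟨fun hlt => absurd hlt hge.not_gt, hab⟩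
  · refine (mem_iff_of_measurableSet_obsSigma hA fun n hn => (h n ?_).1 ?_).1 hω.1 <;>
      grind
  · exact tauC_le_of_le L η (fun n hn => (h n (by grind)).2) hω.2

end ChangePoint

theorem stmt_9_general {𝒳 : Type*} [MeasurableSpace 𝒳]
    (ν0 ν1u ν1 : Measure 𝒳)
    (hdom : StochLarger (ν1.map (llr ν1u ν0)) (ν1u.map (llr ν1u ν0)))
    (η : ℝ) (lam : ℕ) (hlam : 1 ≤ lam)
    -- `P₁ = P_λ^{ν0, ν̲1}` and `P₂ = P_λ^{ν0, ν1}` are the change-point product laws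
    (P₁ P₂ : Measure (ℕ → 𝒳))
    [IsProbabilityMeasure P₁] [IsProbabilityMeasure P₂]
    (hP₁indep : iIndepFun (fun (n : ℕ) (ω : ℕ → 𝒳) => ω n) P₁)
    (hP₂indep : iIndepFun (fun (n : ℕ) (ω : ℕ → 𝒳) => ω n) P₂)
    (hP₁marg : ∀ n : ℕ, 1 ≤ n →
      P₁.map (fun ω => ω n) = if n < lam then ν0 else ν1u)
    (hP₂marg : ∀ n : ℕ, 1 ≤ n →
      P₂.map (fun ω => ω n) = if n < lam then ν0 else ν1) :
    -- delay `(τ_C* − λ + 1)⁺` is `tauC (llr ν1u ν0) η ω + 1 - λ` in truncated `ℕ∞` arithmetic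
    (∀ N : ℕ, ∀ g₁ g₂ : (ℕ → 𝒳) → ℝ≥0∞,
      Measurable[obsSigma 𝒳 (lam - 1)] g₁ → Measurable[obsSigma 𝒳 (lam - 1)] g₂ →
      (∀ A : Set (ℕ → 𝒳), MeasurableSet[obsSigma 𝒳 (lam - 1)] A →
        P₁ (A ∩ {ω | tauC (llr ν1u ν0) η ω + 1 - (lam : ℕ∞) ≤ (N : ℕ∞)})
          = ∫⁻ ω in A, g₁ ω ∂P₁) →
      (∀ A : Set (ℕ → 𝒳), MeasurableSet[obsSigma 𝒳 (lam - 1)] A →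
        P₂ (A ∩ {ω | tauC (llr ν1u ν0) η ω + 1 - (lam : ℕ∞) ≤ (N : ℕ∞)})
          = ∫⁻ ω in A, g₂ ω ∂P₂) →
      ∀ᵐ ω ∂P₁, g₁ ω ≤ g₂ ω) ∧
    (∀ e₁ e₂ : (ℕ → 𝒳) → ℝ≥0∞,
      Measurable[obsSigma 𝒳 (lam - 1)] e₁ → Measurable[obsSigma 𝒳 (lam - 1)] e₂ →
      (∀ A : Set (ℕ → 𝒳), MeasurableSet[obsSigma 𝒳 (lam - 1)] A →
        ∫⁻ ω in A, ((tauC (llr ν1u ν0) η ω + 1 - (lam : ℕ∞) : ℕ∞) : ℝ≥0∞) ∂P₁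
          = ∫⁻ ω in A, e₁ ω ∂P₁) →
      (∀ A : Set (ℕ → 𝒳), MeasurableSet[obsSigma 𝒳 (lam - 1)] A →
        ∫⁻ ω in A, ((tauC (llr ν1u ν0) η ω + 1 - (lam : ℕ∞) : ℕ∞) : ℝ≥0∞) ∂P₂
          = ∫⁻ ω in A, e₂ ω ∂P₂) →
      ∀ᵐ ω ∂P₁, e₂ ω ≤ e₁ ω) := by
  set L := llr ν1u ν0
  have hle := obsSigma_le (𝒳 := 𝒳) (lam - 1)
  have hpre (n : ℕ) (h1 : 1 ≤ n) (hlt : n < lam) :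
      P₁.map (fun ω => ω n) = P₂.map (fun ω => ω n) := by
    rw [hP₁marg n h1, hP₂marg n h1, if_pos hlt, if_pos hlt]
  have hpost (n : ℕ) (hn : lam ≤ n) :
      StochLarger ((P₂.map fun ω => ω n).map L) ((P₁.map fun ω => ω n).map L) := by
    rwa [hP₁marg n (hlam.trans hn), hP₂marg n (hlam.trans hn), if_neg hn.not_gt, if_neg hn.not_gt]
  have hdelay (N : ℕ) :
      {ω | tauC L η ω + 1 - lam ≤ N} = {ω | tauC L η ω ≤ (lam - 1 + N : ℕ)} :=
    Set.ext fun ω => ENat.add_one_sub_le_iff hlam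
  have hagree : ∀ A, MeasurableSet[obsSigma 𝒳 (lam - 1)] A → P₁ A = P₂ A :=
    fun _ => measure_eq_of_measurableSet_obsSigma hP₁indep hP₂indep hpre
  have hcomp (N : ℕ) (A : Set (ℕ → 𝒳)) (hA : MeasurableSet[obsSigma 𝒳 (lam - 1)] A) :
      P₁ (A ∩ {ω | tauC L η ω + 1 - lam ≤ N}) ≤ P₂ (A ∩ {ω | tauC L η ω + 1 - lam ≤ N}) := by
    rw [hdelay]
    exact measure_inter_tauC_le_le_of_stochLarger hP₁indep hP₂indep hpre (measurable_llr _ _)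
      hpost η hA _
  refine ⟨fun N g₁ g₂ hg₁ hg₂ hpa₁ hpa₂ => ?_, fun e₁ e₂ he₁ he₂ hpa₁ hpa₂ => ?_⟩
  · refine ae_le_of_forall_setLIntegral_le_of_measurable hle hg₁ hg₂ fun A hA => ?_
    calc ∫⁻ ω in A, g₁ ω ∂P₁ = P₁ (A ∩ {ω | tauC L η ω + 1 - lam ≤ N}) := (hpa₁ A hA).symm
      _ ≤ P₂ (A ∩ {ω | tauC L η ω + 1 - lam ≤ N}) := hcomp N A hA
      _ = ∫⁻ ω in A, g₂ ω ∂P₂ := hpa₂ A hA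
      _ = ∫⁻ ω in A, g₂ ω ∂P₁ := (setLIntegral_eq_of_forall_measure_eq hle hagree hg₂ hA).symm
  · refine ae_le_of_forall_setLIntegral_le_of_measurable hle he₂ he₁ fun A hA => ?_
    have hD (N : ℕ) : MeasurableSet {ω | tauC L η ω + 1 - lam ≤ N} := by
      rw [hdelay]
      exact measurableSet_tauC_le L η (measurable_llr _ _) _
    calc ∫⁻ ω in A, e₂ ω ∂P₁ = ∫⁻ ω in A, e₂ ω ∂P₂ :=
          setLIntegral_eq_of_forall_measure_eq hle hagree he₂ hA
      _ = ∫⁻ ω in A, ((tauC L η ω + 1 - lam : ℕ∞) : ℝ≥0∞) ∂P₂ := (hpa₂ A hA).symm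
      _ ≤ ∫⁻ ω in A, ((tauC L η ω + 1 - lam : ℕ∞) : ℝ≥0∞) ∂P₁ :=
          setLIntegral_enat_le_of_measure_inter_le hD (hagree A hA) (hcomp · A hA)
      _ = ∫⁻ ω in A, e₁ ω ∂P₁ := hpa₁ A hA

/-- Let `ν̲1 ≪ ν0` with `L* = log (dν̲1/dν0)` continuous on the support of
`ν0`, and let `ν1` be such that the `L*`-pushforward of `ν1` stochastically dominates that of
`ν̲1`.  Let `τ_C*` be the CUSUM stopping time with statistic `L*` and threshold `η`.  Then for
every change point `λ ≥ 1` and every `N ≥ 0`, almost surely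
`P_λ^{ν0,ν̲1}((τ_C* − λ + 1)⁺ ≤ N | 𝓕_{λ−1}) ≤ P_λ^{ν0,ν1}((τ_C* − λ + 1)⁺ ≤ N | 𝓕_{λ−1})`,
and consequently, almost surely
`E_λ^{ν0,ν̲1}[(τ_C* − λ + 1)⁺ | 𝓕_{λ−1}] ≥ E_λ^{ν0,ν1}[(τ_C* − λ + 1)⁺ | 𝓕_{λ−1}]`.
Conditional probabilities and expectations are formalized by quantifying over all versions,
i.e. all `𝓕_{λ−1}`-measurable functions satisfying the defining partial-averaging property. -/
theorem stmt_9 {𝒳 : Type*} [MeasurableSpace 𝒳] [TopologicalSpace 𝒳]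
    (ν0 ν1u ν1 : Measure 𝒳)
    [IsProbabilityMeasure ν0] [IsProbabilityMeasure ν1u] [IsProbabilityMeasure ν1]
    (habs : ν1u ≪ ν0)
    (hLcont : ContinuousOn (llr ν1u ν0) (measSupport ν0))
    (hdom : StochLarger (ν1.map (llr ν1u ν0)) (ν1u.map (llr ν1u ν0)))
    (η : ℝ) (lam : ℕ) (hlam : 1 ≤ lam)
    -- `P₁ = P_λ^{ν0, ν̲1}` and `P₂ = P_λ^{ν0, ν1}` are the change-point product laws
    (P₁ P₂ : Measure (ℕ → 𝒳))
    [IsProbabilityMeasure P₁] [IsProbabilityMeasure P₂]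
    (hP₁indep : iIndepFun (fun (n : ℕ) (ω : ℕ → 𝒳) => ω n) P₁)
    (hP₂indep : iIndepFun (fun (n : ℕ) (ω : ℕ → 𝒳) => ω n) P₂)
    (hP₁marg : ∀ n : ℕ, 1 ≤ n →
      P₁.map (fun ω => ω n) = if n < lam then ν0 else ν1u)
    (hP₂marg : ∀ n : ℕ, 1 ≤ n →
      P₂.map (fun ω => ω n) = if n < lam then ν0 else ν1) :
    -- delay `(τ_C* − λ + 1)⁺` is `tauC (llr ν1u ν0) η ω + 1 - λ` in truncated `ℕ∞` arithmetic
    (∀ N : ℕ, ∀ g₁ g₂ : (ℕ → 𝒳) → ℝ≥0∞,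
      Measurable[obsSigma 𝒳 (lam - 1)] g₁ → Measurable[obsSigma 𝒳 (lam - 1)] g₂ →
      (∀ A : Set (ℕ → 𝒳), MeasurableSet[obsSigma 𝒳 (lam - 1)] A →
        P₁ (A ∩ {ω | tauC (llr ν1u ν0) η ω + 1 - (lam : ℕ∞) ≤ (N : ℕ∞)})
          = ∫⁻ ω in A, g₁ ω ∂P₁) →
      (∀ A : Set (ℕ → 𝒳), MeasurableSet[obsSigma 𝒳 (lam - 1)] A →
        P₂ (A ∩ {ω | tauC (llr ν1u ν0) η ω + 1 - (lam : ℕ∞) ≤ (N : ℕ∞)})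
          = ∫⁻ ω in A, g₂ ω ∂P₂) →
      ∀ᵐ ω ∂P₁, g₁ ω ≤ g₂ ω) ∧
    (∀ e₁ e₂ : (ℕ → 𝒳) → ℝ≥0∞,
      Measurable[obsSigma 𝒳 (lam - 1)] e₁ → Measurable[obsSigma 𝒳 (lam - 1)] e₂ →
      (∀ A : Set (ℕ → 𝒳), MeasurableSet[obsSigma 𝒳 (lam - 1)] A →
        ∫⁻ ω in A, ((tauC (llr ν1u ν0) η ω + 1 - (lam : ℕ∞) : ℕ∞) : ℝ≥0∞) ∂P₁
          = ∫⁻ ω in A, e₁ ω ∂P₁) →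
      (∀ A : Set (ℕ → 𝒳), MeasurableSet[obsSigma 𝒳 (lam - 1)] A →
        ∫⁻ ω in A, ((tauC (llr ν1u ν0) η ω + 1 - (lam : ℕ∞) : ℕ∞) : ℝ≥0∞) ∂P₂
          = ∫⁻ ω in A, e₂ ω ∂P₂) →
      ∀ᵐ ω ∂P₁, e₂ ω ≤ e₁ ω) :=
  stmt_9_general ν0 ν1u ν1 hdom η lam hlam P₁ P₂ hP₁indep hP₂indep hP₁marg hP₂marg
end

section
/- (Core estimate in the proof of Theorem 3.) Let (𝒳,𝓕) be a measurable space, ν0 and ν̲1 probability measures with ν̲1 ≪ ν0, L* = log(dν̲1/dν0) continuous on the support of ν0, and let ν1 be a probability measure such that the pushforward of ν1 under L* is stochastically larger than the pushforward of ν̲1 under L*. Let Λ have geometric prior π_k = ρ(1−ρ)^{k−1} and let τ_S* = inf{n ≥ 1 : log( Σ_{k=1}^n π_k exp( Σ_{i=k}^n L*(X_i) ) ) ≥ η} for a threshold η ∈ ℝ. Then E^{ν0,ν̲1}[(τ_S* − Λ)^+] ≥ E^{ν0,ν1}[(τ_S* − Λ)^+], i.e. the average detection delay of τ_S* is maximized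 over the post-change distribution at ν̲1. Moreover PFA^{ν0,ν1}(τ_S*) = PFA^{ν0,ν̲1}(τ_S*), since the probability of false alarm depends only on the pre-change distribution. -/
open MeasureTheory ProbabilityTheory ENNReal

/-- `τ` is a stopping time with respect to the observation filtration `(𝓕_n)`. -/
def IsObsStoppingTime {𝒳 : Type*} [MeasurableSpace 𝒳] (τ : (ℕ → 𝒳) → ℕ∞) : Prop :=
  ∀ n : ℕ, MeasurableSet[obsSigma 𝒳 n] {ω | τ ω ≤ (n : ℕ∞)}

/-- `P` is the law `P_λ^{μ,γ}` of the observation sequence with change point `λ`: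
the coordinates are independent, `X_n ∼ μ` for `n ≤ λ − 1` and `X_n ∼ γ` for `n ≥ λ`. -/
def IsChangePointLaw {𝒳 : Type*} [MeasurableSpace 𝒳] (lam : ℕ) (μ γ : Measure 𝒳)
    (P : Measure (ℕ → 𝒳)) : Prop :=
  IsProbabilityMeasure P ∧
  iIndepFun (fun (n : ℕ) (ω : ℕ → 𝒳) => ω n) P ∧
  ∀ n : ℕ, 1 ≤ n → P.map (fun ω => ω n) = if n < lam then μ else γ

/-- `Q` is the Bayesian joint law of the change point `Λ` (first component, with geometric
prior `π_k = ρ (1−ρ)^{k−1}`) and of the observation sequence (second component), whose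
conditional law given `Λ = λ` is the change-point law `Plaw λ = P_λ^{μ,γ}`. -/
def IsBayesLaw {𝒳 : Type*} [MeasurableSpace 𝒳] (ρ : ℝ) (μ γ : Measure 𝒳)
    (Plaw : ℕ → Measure (ℕ → 𝒳)) (Q : Measure (ℕ × (ℕ → 𝒳))) : Prop :=
  IsProbabilityMeasure Q ∧
  (∀ lam : ℕ, 1 ≤ lam → IsChangePointLaw lam μ γ (Plaw lam)) ∧
  (∀ lam : ℕ, 1 ≤ lam → ∀ A : Set (ℕ → 𝒳), MeasurableSet A →
    Q ({lam} ×ˢ A) = ENNReal.ofReal (ρ * (1 - ρ) ^ (lam - 1)) * Plaw lam A)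

/-- The Shiryaev statistic at time `n ≥ 1` for geometric prior with parameter `ρ`:
`log (∑_{k=1}^n ρ (1−ρ)^{k−1} exp (∑_{i=k}^n L(X_i)))`. -/
noncomputable def shiryaevS {𝒳 : Type*} (ρ : ℝ) (L : 𝒳 → ℝ) (ω : ℕ → 𝒳) (n : ℕ) : ℝ :=
  Real.log (∑ k ∈ Finset.Icc 1 n,
    ρ * (1 - ρ) ^ (k - 1) * Real.exp (∑ i ∈ Finset.Icc k n, L (ω i)))

/-- The Shiryaev stopping time
`τ_S = inf {n ≥ 1 : log (∑_{k=1}^n π_k exp (∑_{i=k}^n L(X_i))) ≥ η}`. -/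
noncomputable def tauS {𝒳 : Type*} (ρ : ℝ) (L : 𝒳 → ℝ) (η : ℝ) (ω : ℕ → 𝒳) : ℕ∞ :=
  sInf {m : ℕ∞ | ∃ n : ℕ, m = n ∧ 1 ≤ n ∧ η ≤ shiryaevS ρ L ω n}

/-- The probability of false alarm `PFA(τ) = P(τ < Λ)` under the Bayesian joint law `Q`. -/
noncomputable def PFA {𝒳 : Type*} [MeasurableSpace 𝒳] (Q : Measure (ℕ × (ℕ → 𝒳)))
    (τ : (ℕ → 𝒳) → ℕ∞) : ℝ≥0∞ :=
  Q {p | τ p.2 < (p.1 : ℕ∞)}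

/-- The average detection delay `ADD(τ) = E[(τ − Λ)⁺]` under the Bayesian joint law `Q`
(`(τ − Λ)⁺` is truncated `ℕ∞` subtraction). -/
noncomputable def ADD {𝒳 : Type*} [MeasurableSpace 𝒳] (Q : Measure (ℕ × (ℕ → 𝒳)))
    (τ : (ℕ → 𝒳) → ℕ∞) : ℝ≥0∞ :=
  ∫⁻ p, ((τ p.2 - (p.1 : ℕ∞) : ℕ∞) : ℝ≥0∞) ∂Q

/-!
Everything is a function of the log-likelihood ratios `L(X_1), L(X_2), …`. The Shiryaev
statistic is increasing in each of them, so `{τ > m}` is a lower set in the first `m` of them.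
Given `Λ = λ` these are independent, with law `L_*ν0` before `λ` and `L_*ν̲1` resp. `L_*ν1` from
`λ` on; coordinatewise stochastic order passes to product measures, so `P_λ(τ > m)` can only
decrease when `ν̲1` is replaced by `ν1`. Summing `(τ − Λ)⁺ = ∑ₙ 1{τ > Λ + n}` against the prior
gives the delay comparison. The false alarm event `{τ < λ}` only involves `X_1, …, X_{λ−1}`,
whose law is the same under both.
-/

open Set

def StochLE {α : Type*} [MeasurableSpace α] [Preorder α] (μ ν : Measure α) : Prop :=
  ∀ s, MeasurableSet s → IsUpperSet s → μ s ≤ ν s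

namespace StochLE

variable {α β : Type*} [MeasurableSpace α] [Preorder α] [MeasurableSpace β] [Preorder β]

theorem refl (μ : Measure α) : StochLE μ μ := fun _ _ _ => le_rfl

theorem map {μ ν : Measure α} (h : StochLE μ ν) {f : α → β} (hf : Measurable f)
    (hmono : Monotone f) : StochLE (μ.map f) (ν.map f) := by
  intro s hs hup
  rw [Measure.map_apply hf hs, Measure.map_apply hf hs]
  exact h _ (hf hs) (hup.preimage hmono)

theorem measure_le_of_isLowerSet {μ ν : Measure α} [IsProbabilityMeasure μ]
    [IsProbabilityMeasure ν] (h : StochLE μ ν) {s : Set α} (hs : MeasurableSet s)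
    (hlow : IsLowerSet s) : ν s ≤ μ s := by
  have hcompl := h sᶜ hs.compl hlow.compl
  rw [prob_compl_eq_one_sub hs, prob_compl_eq_one_sub hs] at hcompl
  exact (ENNReal.sub_le_sub_iff_left prob_le_one ENNReal.one_ne_top).1 hcompl

theorem prod {μ₁ μ₂ : Measure α} {ν₁ ν₂ : Measure β} [SFinite μ₁] [SFinite μ₂] [SFinite ν₁]
    [SFinite ν₂] (hμ : StochLE μ₁ μ₂) (hν : StochLE ν₁ ν₂) :
    StochLE (μ₁.prod ν₁) (μ₂.prod ν₂) := by
  intro s hs hup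
  calc (μ₁.prod ν₁) s = ∫⁻ x, ν₁ (Prod.mk x ⁻¹' s) ∂μ₁ := Measure.prod_apply hs
    _ ≤ ∫⁻ x, ν₂ (Prod.mk x ⁻¹' s) ∂μ₁ := lintegral_mono fun x =>
        hν _ (measurable_prodMk_left hs) (hup.preimage fun _ _ h => ⟨le_rfl, h⟩)
    _ = ∫⁻ y, μ₁ ((·, y) ⁻¹' s) ∂ν₂ := by
        rw [← Measure.prod_apply hs, Measure.prod_apply_symm hs]
    _ ≤ ∫⁻ y, μ₂ ((·, y) ⁻¹' s) ∂ν₂ := lintegral_mono fun y =>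
        hμ _ (measurable_prodMk_right hs) (hup.preimage fun _ _ h => ⟨h, le_rfl⟩)
    _ = (μ₂.prod ν₂) s := (Measure.prod_apply_symm hs).symm

theorem pi {n : ℕ} {μ ν : Fin n → Measure α} [∀ i, SigmaFinite (μ i)] [∀ i, SigmaFinite (ν i)]
    (h : ∀ i, StochLE (μ i) (ν i)) : StochLE (Measure.pi μ) (Measure.pi ν) := by
  induction n with
  | zero => rw [Measure.pi_of_empty μ, Measure.pi_of_empty ν]; exact refl _
  | succ n ih =>
    rw [← (measurePreserving_piFinSuccAbove μ 0).symm.map_eq,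
      ← (measurePreserving_piFinSuccAbove ν 0).symm.map_eq]
    exact ((h 0).prod (ih fun i => h _)).map (MeasurableEquiv.measurable _)
      (Fin.insertNthOrderIso (fun _ => α) 0).monotone

end StochLE

theorem measure_iUnion_Ici_le {μ ν : Measure ℝ} (h : ∀ t, μ (Ici t) ≤ ν (Ici t)) {u : ℕ → ℝ}
    (hu : Antitone u) : μ (⋃ n, Ici (u n)) ≤ ν (⋃ n, Ici (u n)) := by
  have hmono : Monotone fun n => Ici (u n) := fun _ _ hmn => Ici_subset_Ici.2 (hu hmn)
  rw [hmono.measure_iUnion, hmono.measure_iUnion]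
  exact iSup_mono fun n => h _

/-- On `ℝ` the nonempty upper sets are `univ`, `Ici a` and `Ioi a`, and the first and last are
increasing unions of half-lines `Ici`. -/
theorem StochLarger.stochLE {μ ν : Measure ℝ} (h : StochLarger ν μ) : StochLE μ ν := by
  intro s _ hup
  rcases s.eq_empty_or_nonempty with rfl | hne
  · simp
  by_cases hbdd : BddBelow s
  swap
  · have hs : s = ⋃ n : ℕ, Ici (-(n : ℝ)) := by
      ext x
      refine ⟨fun _ => mem_iUnion.2 ⟨⌈-x⌉₊, by simpa [neg_le] using Nat.le_ceil (-x)⟩, fun _ => ?_⟩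
      obtain ⟨y, hy, hyx⟩ := not_bddBelow_iff.1 hbdd x
      exact hup hyx.le hy
    rw [hs]
    exact measure_iUnion_Ici_le h fun m n hmn => by simpa using hmn
  have hglb := isGLB_csInf hne hbdd
  have hs : ⋃ x ∈ s, Ici x = s :=
    subset_antisymm (iUnion₂_subset fun _ hx => hup.Ici_subset hx)
      fun x hx => mem_biUnion hx self_mem_Ici
  by_cases hmem : sInf s ∈ s
  · rw [← hs, hglb.biUnion_Ici_eq_Ici hmem]
    exact h _
  · have hIoi : ⋃ n : ℕ, Ici (sInf s + 1 / (n + 1)) = Ioi (sInf s) :=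
      iUnion_Ici_eq_Ioi_of_lt_of_tendsto (fun n => by simp; positivity)
        (by simpa using tendsto_one_div_add_atTop_nhds_zero_nat.const_add (sInf s))
    rw [← hs, hglb.biUnion_Ici_eq_Ioi hmem, ← hIoi]
    exact measure_iUnion_Ici_le h fun m n hmn => by gcongr

theorem lt_tauS_iff {𝒳 : Type*} (ρ : ℝ) (L : 𝒳 → ℝ) (η : ℝ) (ω : ℕ → 𝒳) (m : ℕ) :
    (m : ℕ∞) < tauS ρ L η ω ↔ ∀ k ∈ Finset.Icc 1 m, shiryaevS ρ L ω k < η := by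
  rw [tauS, ← ENat.add_one_le_iff (ENat.natCast_ne_top m), le_sInf_iff]
  simp only [mem_ofPred_eq, forall_exists_index, and_imp, Finset.mem_Icc]
  refine ⟨fun h k hk₁ hkm => lt_of_not_ge fun hk => ?_, ?_⟩
  · have := h k k rfl hk₁ hk
    norm_cast at this
    omega
  · rintro h _ n rfl hn₁ hn
    have : m + 1 ≤ n := by
      by_contra hnm
      exact (h n hn₁ (by omega)).not_ge hn
    exact_mod_cast this

theorem shiryaevS_congr {𝒳 𝒴 : Type*} (ρ : ℝ) {L : 𝒳 → ℝ} {L' : 𝒴 → ℝ} {x : ℕ → 𝒳}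
    {y : ℕ → 𝒴} {n : ℕ} (h : ∀ i ∈ Finset.Icc 1 n, L (x i) = L' (y i)) :
    shiryaevS ρ L x n = shiryaevS ρ L' y n := by
  unfold shiryaevS
  refine congrArg Real.log (Finset.sum_congr rfl fun k hk => ?_)
  refine congrArg (fun s => _ * Real.exp s) (Finset.sum_congr rfl fun i hi => h i ?_)
  simp only [Finset.mem_Icc] at hk hi ⊢
  omega

theorem lt_tauS_congr {𝒳 𝒴 : Type*} (ρ η : ℝ) {L : 𝒳 → ℝ} {L' : 𝒴 → ℝ} {x : ℕ → 𝒳}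
    {y : ℕ → 𝒴} {m : ℕ} (h : ∀ i ∈ Finset.Icc 1 m, L (x i) = L' (y i)) :
    (m : ℕ∞) < tauS ρ L η x ↔ (m : ℕ∞) < tauS ρ L' η y := by
  simp only [lt_tauS_iff]
  refine forall₂_congr fun k hk => ?_
  rw [shiryaevS_congr ρ fun i hi => h i ?_]
  simp only [Finset.mem_Icc] at hk hi ⊢
  omega

theorem measurable_shiryaevS (ρ : ℝ) (k : ℕ) :
    Measurable fun x : ℕ → ℝ => shiryaevS ρ id x k := by
  unfold shiryaevS
  fun_prop

theorem monotone_shiryaevS {ρ : ℝ} (hρ₀ : 0 < ρ) (hρ₁ : ρ ≤ 1) {k : ℕ} (hk : 1 ≤ k) :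
    Monotone fun x : ℕ → ℝ => shiryaevS ρ id x k := by
  intro x y hxy
  have : 0 ≤ 1 - ρ := by linarith
  have hpos : 0 < ∑ j ∈ Finset.Icc 1 k,
      ρ * (1 - ρ) ^ (j - 1) * Real.exp (∑ i ∈ Finset.Icc j k, x i) :=
    Finset.sum_pos' (fun j _ => by positivity)
      ⟨1, Finset.mem_Icc.2 ⟨le_rfl, hk⟩, by simp; positivity⟩
  refine Real.log_le_log hpos (Finset.sum_le_sum fun j _ => ?_)
  gcongr with i
  exact hxy i

theorem isLowerSet_lt_tauS {ρ : ℝ} (hρ₀ : 0 < ρ) (hρ₁ : ρ ≤ 1) (η : ℝ) (m : ℕ) :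
    IsLowerSet {x : ℕ → ℝ | (m : ℕ∞) < tauS ρ id η x} := by
  intro x y hyx hx
  simp only [mem_ofPred_eq, lt_tauS_iff] at hx ⊢
  exact fun k hk => (monotone_shiryaevS hρ₀ hρ₁ (Finset.mem_Icc.1 hk).1 hyx).trans_lt (hx k hk)

theorem measurableSet_lt_tauS_id (ρ η : ℝ) (m : ℕ) :
    MeasurableSet {x : ℕ → ℝ | (m : ℕ∞) < tauS ρ id η x} := by
  simp only [lt_tauS_iff, ofPred_forall]
  exact .biInter (to_countable _) fun k _ =>
    measurableSet_lt (measurable_shiryaevS ρ k) measurable_const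

/-- `v i` sits at index `i + 1`; index `0` holds junk, which the Shiryaev statistics never read. -/
def extendSeq {m : ℕ} (v : Fin m → ℝ) : ℕ → ℝ :=
  fun j => if h : j - 1 < m then v ⟨j - 1, h⟩ else 0

theorem measurable_extendSeq (m : ℕ) : Measurable (extendSeq (m := m)) := by
  refine measurable_pi_lambda _ fun j => ?_
  unfold extendSeq
  split_ifs
  · exact measurable_pi_apply _
  · exact measurable_const

theorem monotone_extendSeq (m : ℕ) : Monotone (extendSeq (m := m)) := by
  intro v w hvw j
  unfold extendSeq
  split_ifs
  · exact hvw _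
  · exact le_rfl

def obsVec {𝒳 : Type*} (L : 𝒳 → ℝ) (m : ℕ) (ω : ℕ → 𝒳) : Fin m → ℝ :=
  fun i => L (ω (i + 1))

theorem measurable_obsVec {𝒳 : Type*} [MeasurableSpace 𝒳] {L : 𝒳 → ℝ} (hL : Measurable L)
    (m : ℕ) : Measurable (obsVec L m) :=
  measurable_pi_lambda _ fun _ => hL.comp (measurable_pi_apply _)

def shiryaevContinuationSet (ρ η : ℝ) (m : ℕ) : Set (Fin m → ℝ) :=
  extendSeq ⁻¹' {x | (m : ℕ∞) < tauS ρ id η x}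

theorem isLowerSet_shiryaevContinuationSet {ρ : ℝ} (hρ₀ : 0 < ρ) (hρ₁ : ρ ≤ 1) (η : ℝ)
    (m : ℕ) : IsLowerSet (shiryaevContinuationSet ρ η m) :=
  (isLowerSet_lt_tauS hρ₀ hρ₁ η m).preimage (monotone_extendSeq m)

theorem measurableSet_shiryaevContinuationSet (ρ η : ℝ) (m : ℕ) :
    MeasurableSet (shiryaevContinuationSet ρ η m) :=
  measurable_extendSeq m (measurableSet_lt_tauS_id ρ η m)

theorem setOf_lt_tauS_eq_preimage {𝒳 : Type*} (ρ : ℝ) (L : 𝒳 → ℝ) (η : ℝ) (m : ℕ) :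
    {ω : ℕ → 𝒳 | (m : ℕ∞) < tauS ρ L η ω} = obsVec L m ⁻¹' shiryaevContinuationSet ρ η m := by
  ext ω
  refine lt_tauS_congr ρ η fun i hi => ?_
  obtain ⟨hi₁, him⟩ := Finset.mem_Icc.1 hi
  simp only [extendSeq, id, dif_pos (show i - 1 < m by omega), obsVec]
  congr 2
  omega

theorem setOf_tauS_lt_succ_eq_preimage {𝒳 : Type*} (ρ : ℝ) (L : 𝒳 → ℝ) (η : ℝ) (m : ℕ) :
    {ω : ℕ → 𝒳 | tauS ρ L η ω < ((m + 1 : ℕ) : ℕ∞)} =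
      obsVec L m ⁻¹' (shiryaevContinuationSet ρ η m)ᶜ := by
  rw [preimage_compl, ← setOf_lt_tauS_eq_preimage]
  ext ω
  simp [ENat.lt_add_one_iff (ENat.natCast_ne_top m)]

theorem measurableSet_lt_tauS {𝒳 : Type*} [MeasurableSpace 𝒳] {L : 𝒳 → ℝ} (hL : Measurable L)
    (ρ η : ℝ) (m : ℕ) : MeasurableSet {ω : ℕ → 𝒳 | (m : ℕ∞) < tauS ρ L η ω} := by
  rw [setOf_lt_tauS_eq_preimage]
  exact measurable_obsVec hL m (measurableSet_shiryaevContinuationSet ρ η m)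

theorem measurableSet_tauS_lt {𝒳 : Type*} [MeasurableSpace 𝒳] {L : 𝒳 → ℝ} (hL : Measurable L)
    (ρ η : ℝ) (m : ℕ) : MeasurableSet {ω : ℕ → 𝒳 | tauS ρ L η ω < m} := by
  cases m with
  | zero => simp
  | succ m =>
    rw [setOf_tauS_lt_succ_eq_preimage]
    exact measurable_obsVec hL m (measurableSet_shiryaevContinuationSet ρ η m).compl

theorem ProbabilityTheory.iIndepFun.map_obsVec {𝒳 : Type*} [MeasurableSpace 𝒳]
    {P : Measure (ℕ → 𝒳)} [IsProbabilityMeasure P] (h : iIndepFun (fun n (ω : ℕ → 𝒳) => ω n) P)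
    {L : 𝒳 → ℝ} (hL : Measurable L) (m : ℕ) :
    P.map (obsVec L m) = Measure.pi fun i : Fin m => P.map fun ω => L (ω (i + 1)) :=
  ((h.comp (fun _ => L) fun _ => hL).precomp (g := fun i : Fin m => (i : ℕ) + 1)
    fun i j hij => Fin.ext (by simpa using hij)).map_fun_eq_pi_map
    fun _ => (hL.comp (measurable_pi_apply _)).aemeasurable

namespace IsChangePointLaw

variable {𝒳 : Type*} [MeasurableSpace 𝒳] {lam : ℕ} {μ γ γ₁ γ₂ : Measure 𝒳}
  {P P₁ P₂ : Measure (ℕ → 𝒳)} {L : 𝒳 → ℝ}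

theorem map_comp_eval (hP : IsChangePointLaw lam μ γ P) (hL : Measurable L) {n : ℕ}
    (hn : 1 ≤ n) : P.map (fun ω => L (ω n)) = (if n < lam then μ else γ).map L := by
  rw [← hP.2.2 n hn, Measure.map_map hL (measurable_pi_apply n)]
  rfl

theorem stochLE_map_obsVec (h₁ : IsChangePointLaw lam μ γ₁ P₁)
    (h₂ : IsChangePointLaw lam μ γ₂ P₂) (hL : Measurable L)
    (hdom : StochLE (γ₁.map L) (γ₂.map L)) (m : ℕ) :
    StochLE (P₁.map (obsVec L m)) (P₂.map (obsVec L m)) := by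
  have := h₁.1
  have := h₂.1
  rw [h₁.2.1.map_obsVec hL, h₂.2.1.map_obsVec hL]
  refine StochLE.pi fun i => ?_
  rw [h₁.map_comp_eval hL (by omega), h₂.map_comp_eval hL (by omega)]
  split_ifs
  · exact StochLE.refl _
  · exact hdom

theorem map_obsVec_eq_of_lt (h₁ : IsChangePointLaw lam μ γ₁ P₁)
    (h₂ : IsChangePointLaw lam μ γ₂ P₂) (hL : Measurable L) {m : ℕ} (hm : m < lam) :
    P₁.map (obsVec L m) = P₂.map (obsVec L m) := by
  have := h₁.1
  have := h₂.1
  rw [h₁.2.1.map_obsVec hL, h₂.2.1.map_obsVec hL]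
  congr! 2 with i
  rw [h₁.map_comp_eval hL (by omega), h₂.map_comp_eval hL (by omega), if_pos (by omega),
    if_pos (by omega)]

theorem measure_lt_tauS_le (h₁ : IsChangePointLaw lam μ γ₁ P₁)
    (h₂ : IsChangePointLaw lam μ γ₂ P₂) (hL : Measurable L)
    (hdom : StochLE (γ₁.map L) (γ₂.map L)) {ρ : ℝ} (hρ₀ : 0 < ρ) (hρ₁ : ρ ≤ 1) (η : ℝ)
    (m : ℕ) :
    P₂ {ω | (m : ℕ∞) < tauS ρ L η ω} ≤ P₁ {ω | (m : ℕ∞) < tauS ρ L η ω} := by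
  have := h₁.1
  have := h₂.1
  have := Measure.isProbabilityMeasure_map (μ := P₁) (measurable_obsVec hL m).aemeasurable
  have := Measure.isProbabilityMeasure_map (μ := P₂) (measurable_obsVec hL m).aemeasurable
  have hC := measurableSet_shiryaevContinuationSet ρ η m
  rw [setOf_lt_tauS_eq_preimage, ← Measure.map_apply (measurable_obsVec hL m) hC,
    ← Measure.map_apply (measurable_obsVec hL m) hC]
  exact (h₁.stochLE_map_obsVec h₂ hL hdom m).measure_le_of_isLowerSet hC
    (isLowerSet_shiryaevContinuationSet hρ₀ hρ₁ η m)

theorem measure_tauS_lt_succ_eq (h₁ : IsChangePointLaw lam μ γ₁ P₁)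
    (h₂ : IsChangePointLaw lam μ γ₂ P₂) (hL : Measurable L) (ρ η : ℝ) {m : ℕ} (hm : m < lam) :
    P₁ {ω | tauS ρ L η ω < ((m + 1 : ℕ) : ℕ∞)} = P₂ {ω | tauS ρ L η ω < ((m + 1 : ℕ) : ℕ∞)} := by
  have hC := (measurableSet_shiryaevContinuationSet ρ η m).compl
  rw [setOf_tauS_lt_succ_eq_preimage, ← Measure.map_apply (measurable_obsVec hL m) hC,
    ← Measure.map_apply (measurable_obsVec hL m) hC, h₁.map_obsVec_eq_of_lt h₂ hL hm]

end IsChangePointLaw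

theorem setOf_snd_mem_eq_iUnion {β : Type*} (E : ℕ → Set β) :
    {p : ℕ × β | p.2 ∈ E p.1} = ⋃ l, {l} ×ˢ E l := by
  ext ⟨l, x⟩
  simp

theorem measurableSet_setOf_snd_mem {β : Type*} [MeasurableSpace β] {E : ℕ → Set β}
    (hE : ∀ l, MeasurableSet (E l)) : MeasurableSet {p : ℕ × β | p.2 ∈ E p.1} := by
  rw [setOf_snd_mem_eq_iUnion]
  exact .iUnion fun l => (measurableSet_singleton l).prod (hE l)

theorem measure_setOf_snd_mem {β : Type*} [MeasurableSpace β] (Q : Measure (ℕ × β))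
    {E : ℕ → Set β} (hE : ∀ l, MeasurableSet (E l)) :
    Q {p | p.2 ∈ E p.1} = ∑' l, Q ({l} ×ˢ E l) := by
  rw [setOf_snd_mem_eq_iUnion]
  refine measure_iUnion (fun k l hkl => ?_) fun l => (measurableSet_singleton l).prod (hE l)
  simpa using Or.inl hkl

theorem ENNReal.tsum_ofReal_geometric {ρ : ℝ} (hρ₀ : 0 < ρ) (hρ₁ : ρ ≤ 1) :
    ∑' l : ℕ, ENNReal.ofReal (ρ * (1 - ρ) ^ l) = 1 := by
  have h₀ : 0 ≤ 1 - ρ := by linarith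
  have h₁ : 1 - ρ < 1 := by linarith
  rw [← ENNReal.ofReal_tsum_of_nonneg (fun l => by positivity)
      ((summable_geometric_of_lt_one h₀ h₁).mul_left ρ),
    tsum_mul_left, tsum_geometric_of_lt_one h₀ h₁]
  simp [hρ₀.ne']

theorem ENat.toENNReal_eq_tsum (a : ℕ∞) :
    (a : ℝ≥0∞) = ∑' n : ℕ, if (n : ℕ∞) < a then 1 else 0 := by
  cases a with
  | top => simp
  | coe A =>
    rw [tsum_eq_sum (s := Finset.range A) (fun n hn => by simpa using hn)]
    simp [Finset.filter_true_of_mem fun x hx => Finset.mem_range.1 hx]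

theorem ADD_eq_tsum {𝒳 : Type*} [MeasurableSpace 𝒳] (Q : Measure (ℕ × (ℕ → 𝒳)))
    {τ : (ℕ → 𝒳) → ℕ∞} (hτ : ∀ m : ℕ, MeasurableSet {ω | (m : ℕ∞) < τ ω}) :
    ADD Q τ = ∑' n : ℕ, Q {p | ((p.1 + n : ℕ) : ℕ∞) < τ p.2} := by
  have hmeas (n : ℕ) : MeasurableSet {p : ℕ × (ℕ → 𝒳) | ((p.1 + n : ℕ) : ℕ∞) < τ p.2} :=
    measurableSet_setOf_snd_mem (E := fun l => {ω | ((l + n : ℕ) : ℕ∞) < τ ω}) fun _ => hτ _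
  have hpoint (p : ℕ × (ℕ → 𝒳)) : ((τ p.2 - (p.1 : ℕ∞) : ℕ∞) : ℝ≥0∞) =
      ∑' n : ℕ, {p : ℕ × (ℕ → 𝒳) | ((p.1 + n : ℕ) : ℕ∞) < τ p.2}.indicator 1 p := by
    rw [ENat.toENNReal_eq_tsum]
    refine tsum_congr fun n => ?_
    simp [indicator, lt_tsub_iff_left]
  simp_rw [ADD, hpoint]
  rw [lintegral_tsum fun n => (measurable_one.indicator (hmeas n)).aemeasurable]
  simp_rw [lintegral_indicator_one (hmeas _)]

namespace IsBayesLaw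

variable {𝒳 : Type*} [MeasurableSpace 𝒳] {ρ : ℝ} {μ γ : Measure 𝒳}
  {Plaw : ℕ → Measure (ℕ → 𝒳)} {Q : Measure (ℕ × (ℕ → 𝒳))}

theorem measure_singleton_succ_prod (hQ : IsBayesLaw ρ μ γ Plaw Q) (l : ℕ)
    {A : Set (ℕ → 𝒳)} (hA : MeasurableSet A) :
    Q ({l + 1} ×ˢ A) = ENNReal.ofReal (ρ * (1 - ρ) ^ l) * Plaw (l + 1) A := by
  simpa using hQ.2.2 (l + 1) (by omega) A hA

/-- `IsBayesLaw` only constrains `Λ ≥ 1`; that the prior already gives this full mass is what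
rules out `Λ = 0`. -/
theorem measure_singleton_zero_prod (hQ : IsBayesLaw ρ μ γ Plaw Q) (hρ₀ : 0 < ρ) (hρ₁ : ρ ≤ 1)
    (A : Set (ℕ → 𝒳)) : Q ({0} ×ˢ A) = 0 := by
  have := hQ.1
  have hsucc : ∑' l : ℕ, Q ({l + 1} ×ˢ (univ : Set (ℕ → 𝒳))) = 1 := by
    rw [← ENNReal.tsum_ofReal_geometric hρ₀ hρ₁]
    refine tsum_congr fun l => ?_
    have := (hQ.2.1 (l + 1) (by omega)).1
    rw [hQ.measure_singleton_succ_prod l .univ, measure_univ, mul_one]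
  have htotal : Q ({0} ×ˢ univ) + 1 = 0 + 1 := by
    have hsplit := measure_setOf_snd_mem Q fun _ => MeasurableSet.univ (α := ℕ → 𝒳)
    simp only [mem_univ, ofPred_true, measure_univ] at hsplit
    rw [tsum_eq_zero_add' ENNReal.summable, hsucc] at hsplit
    rw [← hsplit, zero_add]
  exact measure_mono_null (prod_mono_right (subset_univ A))
    ((ENNReal.add_left_inj ENNReal.one_ne_top).1 htotal)

theorem measure_setOf_snd_mem (hQ : IsBayesLaw ρ μ γ Plaw Q) (hρ₀ : 0 < ρ) (hρ₁ : ρ ≤ 1)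
    {E : ℕ → Set (ℕ → 𝒳)} (hE : ∀ l, MeasurableSet (E l)) :
    Q {p | p.2 ∈ E p.1} = ∑' l, ENNReal.ofReal (ρ * (1 - ρ) ^ l) * Plaw (l + 1) (E (l + 1)) := by
  rw [_root_.measure_setOf_snd_mem Q hE, tsum_eq_zero_add' ENNReal.summable,
    hQ.measure_singleton_zero_prod hρ₀ hρ₁, zero_add]
  exact tsum_congr fun l => hQ.measure_singleton_succ_prod l (hE _)

theorem ADD_eq (hQ : IsBayesLaw ρ μ γ Plaw Q) (hρ₀ : 0 < ρ) (hρ₁ : ρ ≤ 1)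
    {τ : (ℕ → 𝒳) → ℕ∞} (hτ : ∀ m : ℕ, MeasurableSet {ω | (m : ℕ∞) < τ ω}) :
    ADD Q τ = ∑' n : ℕ, ∑' l : ℕ,
      ENNReal.ofReal (ρ * (1 - ρ) ^ l) * Plaw (l + 1) {ω | ((l + 1 + n : ℕ) : ℕ∞) < τ ω} := by
  rw [ADD_eq_tsum Q hτ]
  exact tsum_congr fun n =>
    hQ.measure_setOf_snd_mem hρ₀ hρ₁ (E := fun l => {ω | ((l + n : ℕ) : ℕ∞) < τ ω}) fun _ => hτ _

theorem PFA_eq (hQ : IsBayesLaw ρ μ γ Plaw Q) (hρ₀ : 0 < ρ) (hρ₁ : ρ ≤ 1)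
    {τ : (ℕ → 𝒳) → ℕ∞} (hτ : ∀ m : ℕ, MeasurableSet {ω | τ ω < m}) :
    PFA Q τ = ∑' l : ℕ,
      ENNReal.ofReal (ρ * (1 - ρ) ^ l) * Plaw (l + 1) {ω | τ ω < ((l + 1 : ℕ) : ℕ∞)} :=
  hQ.measure_setOf_snd_mem hρ₀ hρ₁ (E := fun l => {ω | τ ω < l}) hτ

end IsBayesLaw

theorem stmt_13_general {𝒳 : Type*} [MeasurableSpace 𝒳]
    (ν0 ν1u ν1 : Measure 𝒳)
    (hdom : StochLarger (ν1.map (llr ν1u ν0)) (ν1u.map (llr ν1u ν0)))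
    (ρ : ℝ) (hρ : ρ ∈ Set.Ioo (0 : ℝ) 1) (η : ℝ)
    -- Bayesian joint laws `Q₁ = Q^{ν0,ν̲1}` and `Q₂ = Q^{ν0,ν1}` of `(Λ, X)`
    (Plaw₁ Plaw₂ : ℕ → Measure (ℕ → 𝒳))
    (Q₁ Q₂ : Measure (ℕ × (ℕ → 𝒳)))
    (hQ₁ : IsBayesLaw ρ ν0 ν1u Plaw₁ Q₁)
    (hQ₂ : IsBayesLaw ρ ν0 ν1 Plaw₂ Q₂) :
    ADD Q₂ (tauS ρ (llr ν1u ν0) η) ≤ ADD Q₁ (tauS ρ (llr ν1u ν0) η) ∧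
    PFA Q₂ (tauS ρ (llr ν1u ν0) η) = PFA Q₁ (tauS ρ (llr ν1u ν0) η) := by
  obtain ⟨hρ₀, hρ₁⟩ := hρ
  have hL : Measurable (llr ν1u ν0) := measurable_llr _ _
  refine ⟨?_, ?_⟩
  · rw [hQ₁.ADD_eq hρ₀ hρ₁.le (measurableSet_lt_tauS hL ρ η),
      hQ₂.ADD_eq hρ₀ hρ₁.le (measurableSet_lt_tauS hL ρ η)]
    refine ENNReal.tsum_le_tsum fun n => ENNReal.tsum_le_tsum fun l => ?_
    exact mul_le_mul_right ((hQ₁.2.1 _ l.succ_pos).measure_lt_tauS_le (hQ₂.2.1 _ l.succ_pos) hL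
      hdom.stochLE hρ₀ hρ₁.le η _) _
  · rw [hQ₁.PFA_eq hρ₀ hρ₁.le (measurableSet_tauS_lt hL ρ η),
      hQ₂.PFA_eq hρ₀ hρ₁.le (measurableSet_tauS_lt hL ρ η)]
    refine tsum_congr fun l => ?_
    rw [(hQ₁.2.1 _ l.succ_pos).measure_tauS_lt_succ_eq (hQ₂.2.1 _ l.succ_pos) hL ρ η
      l.lt_succ_self]

/-- **core estimate in the proof of Theorem 3.**
Let `ν̲1 ≪ ν0` with `L* = log (dν̲1/dν0)` continuous on the support of `ν0`, and let `ν1` be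
a probability measure whose `L*`-pushforward stochastically dominates that of `ν̲1`.  With a
geometric prior `π_k = ρ (1−ρ)^{k−1}` on the change point and the Shiryaev rule `τ_S*` with
threshold `η`, the average detection delay is maximized over the post-change distribution at
`ν̲1`: `E^{ν0,ν̲1}[(τ_S* − Λ)⁺] ≥ E^{ν0,ν1}[(τ_S* − Λ)⁺]`; moreover
`PFA^{ν0,ν1}(τ_S*) = PFA^{ν0,ν̲1}(τ_S*)`. -/
theorem stmt_13 {𝒳 : Type*} [MeasurableSpace 𝒳] [TopologicalSpace 𝒳]
    (ν0 ν1u ν1 : Measure 𝒳)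
    [IsProbabilityMeasure ν0] [IsProbabilityMeasure ν1u] [IsProbabilityMeasure ν1]
    (habs : ν1u ≪ ν0)
    (hLcont : ContinuousOn (llr ν1u ν0) (measSupport ν0))
    (hdom : StochLarger (ν1.map (llr ν1u ν0)) (ν1u.map (llr ν1u ν0)))
    (ρ : ℝ) (hρ : ρ ∈ Set.Ioo (0 : ℝ) 1) (η : ℝ)
    -- Bayesian joint laws `Q₁ = Q^{ν0,ν̲1}` and `Q₂ = Q^{ν0,ν1}` of `(Λ, X)`
    (Plaw₁ Plaw₂ : ℕ → Measure (ℕ → 𝒳))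
    (Q₁ Q₂ : Measure (ℕ × (ℕ → 𝒳)))
    (hQ₁ : IsBayesLaw ρ ν0 ν1u Plaw₁ Q₁)
    (hQ₂ : IsBayesLaw ρ ν0 ν1 Plaw₂ Q₂) :
    ADD Q₂ (tauS ρ (llr ν1u ν0) η) ≤ ADD Q₁ (tauS ρ (llr ν1u ν0) η) ∧
    PFA Q₂ (tauS ρ (llr ν1u ν0) η) = PFA Q₁ (tauS ρ (llr ν1u ν0) η) :=
  stmt_13_general ν0 ν1u ν1 hdom ρ hρ η Plaw₁ Plaw₂ Q₁ Q₂ hQ₁ hQ₂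
end
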